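/- arXiv:2012.04316 — 7 statements merged into one kernel-verified Lean document; each statement's English description precedes it below -/
import Mathlib

section
/- Let n be a positive integer, q = 2^n, and d = q^3 + q^2 + q - 1. Then gcd(d, q^4 - 1) = 1. -/
/- With `d = q³ + q² + q - 1`, the identity
`(2 - (q² + 2q + 3)(1 - q)) d - (q² + 2q + 3)(q⁴ - 1) = 4` shows that every common divisor of
`d` and `q⁴ - 1` divides `4`; for even `q` the number `d` is odd, so the gcd is `1`. -/

theorem IsCoprime.of_isCoprime_of_linear_combination {R : Type*} [CommRing R] {x y c u v : R}
    (hc : IsCoprime x c) (h : u * x + v * y = c) : IsCoprime x y := by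
  rw [← h, add_comm, IsCoprime.add_mul_right_right_iff] at hc
  exact hc.of_mul_right_right

theorem Int.isCoprime_cubic_pow_four_sub_one_of_even {q : ℤ} (hq : Even q) :
    IsCoprime (q ^ 3 + q ^ 2 + q - 1) (q ^ 4 - 1) := by
  have hodd : Odd (q ^ 3 + q ^ 2 + q - 1) := by
    obtain ⟨k, rfl⟩ := hq
    exact ⟨4 * k ^ 3 + 2 * k ^ 2 + k - 1, by ring⟩
  have hfour : IsCoprime (q ^ 3 + q ^ 2 + q - 1) (2 ^ 2) :=
    (Int.isCoprime_two_right.mpr hodd).pow_right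
  exact hfour.of_isCoprime_of_linear_combination
    (u := 2 - (q ^ 2 + 2 * q + 3) * (1 - q)) (v := -(q ^ 2 + 2 * q + 3)) (by ring)

theorem stmt_0 (n : ℕ) (hn : 0 < n) (q d : ℕ) (hq : q = 2 ^ n)
    (hd : d = q ^ 3 + q ^ 2 + q - 1) :
    Nat.gcd d (q ^ 4 - 1) = 1 := by
  have hq_even : Even q := hq ▸ (Nat.even_pow' hn.ne').mpr even_two
  have hq_pos : 1 ≤ q := hq ▸ Nat.one_le_two_pow
  have hcop := Int.isCoprime_cubic_pow_four_sub_one_of_even (Int.even_coe_nat q |>.mpr hq_even)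
  rw [← Nat.coprime_iff_gcd_eq_one, ← Nat.isCoprime_iff_coprime, hd]
  have h₁ : 1 ≤ q ^ 3 + q ^ 2 + q := by omega
  have h₂ : 1 ≤ q ^ 4 := Nat.one_le_pow _ _ hq_pos
  push_cast [h₁, h₂]
  exact hcop
end

section
/- Let n be a positive integer, q = 2^n, and d = q^3 + q^2 + q - 1. The set of solutions x ∈ F_{q^4} of (x+1)^d + x^d = 1 is exactly the subfield F_{q^2}; in particular this equation has exactly q^2 solutions. -/
/-!
Write `σ x = x ^ q` and `yᵢ = σⁱ x`, so that `σ⁴ = 1` on `F_{q⁴}`. As `d + 1 = q + q² + q³`, we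
have `x ^ (d + 1) = y₁ y₂ y₃`; multiplying the equation by `x (x + 1)` turns it, in characteristic
two, into `e₁ x + e₃ = 0`, where `e₁, e₃` are elementary symmetric functions of the conjugates
`x, y₁, y₂, y₃` and hence fixed by `σ`. Applying `σ` gives `e₁ (x + y₁) = 0`: either `y₁ = x`,
or `e₁ = e₃ = 0`, and then `(x + y₁)(x + y₂)(x + y₃) = x² e₁ + e₃ = 0` makes `x` equal to one of
its conjugates. Either way `σ² x = x`. Conversely, for `x ∈ F_{q²}` one gets `x ^ d = (σ x)²`,
and the equation reduces to `(σ x + 1)² + (σ x)² = 1`. Finally `F_{q²}` has `q²` elements because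
`X ^ q² - X` divides `X ^ q⁴ - X`, which splits into distinct linear factors over `F_{q⁴}`.
-/

open Polynomial Finset

theorem sub_dvd_pow_pow_sub {R : Type*} [CommRing R] (a : R) (m k : ℕ) :
    a ^ m - a ∣ a ^ m ^ k - a := by
  induction k with
  | zero => simp
  | succ k ih =>
    have hsplit : a ^ m ^ (k + 1) - a = ((a ^ m ^ k) ^ m - a ^ m) + (a ^ m - a) := by
      rw [pow_succ, pow_mul]; ring
    rw [hsplit]
    exact dvd_add (ih.trans (sub_dvd_pow_sub_pow _ _ _)) dvd_rfl

theorem FiniteField.card_filter_pow_eq_self {F : Type*} [Field F] [Fintype F] [DecidableEq F]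
    {m k : ℕ} (hF : Fintype.card F = m ^ k) : #{x : F | x ^ m = x} = m := by
  have hm : 1 < m := lt_of_pow_lt_pow_left₀ k (Nat.zero_le _)
    (by rw [one_pow, ← hF]; exact Fintype.one_lt_card)
  have hQ : (X ^ Fintype.card F - X : F[X]) ≠ 0 :=
    FiniteField.X_pow_card_sub_X_ne_zero F Fintype.one_lt_card
  have hdvd : (X ^ m - X : F[X]) ∣ X ^ Fintype.card F - X := hF ▸ sub_dvd_pow_pow_sub X m k
  have hQsplits : Splits (X ^ Fintype.card F - X : F[X]) := by
    rw [splits_iff_card_roots, FiniteField.roots_X_pow_card_sub_X,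
      FiniteField.X_pow_card_sub_X_natDegree_eq F Fintype.one_lt_card]
    rfl
  have hnodup : (X ^ m - X : F[X]).roots.Nodup := Multiset.nodup_of_le
    (FiniteField.roots_X_pow_card_sub_X F ▸ roots.le_of_dvd hQ hdvd) univ.nodup
  calc #{x : F | x ^ m = x} = (X ^ m - X : F[X]).roots.toFinset.card := by
        congr 1
        ext x
        simp [mem_roots (FiniteField.X_pow_card_sub_X_ne_zero F hm), sub_eq_zero]
    _ = (X ^ m - X : F[X]).roots.card := Multiset.toFinset_card_of_nodup hnodup
    _ = m := by
        rw [← (hQsplits.of_dvd hQ hdvd).natDegree_eq_card_roots,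
          FiniteField.X_pow_card_sub_X_natDegree_eq F hm]

theorem pow_eq_sq_apply_of_apply_apply_eq_self {R : Type*} [CommRing R] [IsDomain R]
    (σ : R →+* R) {d : ℕ} (hd : d ≠ 0)
    (hdσ : ∀ x : R, x ^ (d + 1) = σ x * σ (σ x) * σ (σ (σ x))) {x : R}
    (hx : σ (σ x) = x) : x ^ d = σ x ^ 2 := by
  rcases eq_or_ne x 0 with rfl | hx₀
  · rw [map_zero, zero_pow hd, zero_pow two_ne_zero]
  refine mul_left_cancel₀ hx₀ ?_
  rw [← pow_succ', hdσ, hx]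
  ring

section CharTwo

variable {R : Type*} [CommRing R] [IsDomain R] [CharP R 2] (σ : R →+* R) {d : ℕ}

theorem eq_of_esymm_relation_of_orbit {x y₁ y₂ y₃ : R}
    (h₀ : σ x = y₁) (h₁ : σ y₁ = y₂) (h₂ : σ y₂ = y₃) (h₃ : σ y₃ = x)
    (h : (x + y₁ + y₂ + y₃) * x + (x * y₁ * y₂ + x * y₁ * y₃ + x * y₂ * y₃ + y₁ * y₂ * y₃) = 0) :
    y₂ = x := by
  have hσ := congrArg σ h
  simp only [map_add, map_mul, map_zero, h₀, h₁, h₂, h₃] at hσ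
  have of_y₁ : y₁ = x → y₂ = x := fun hy₁ => by rw [← h₁, hy₁, h₀, hy₁]
  by_cases he : x + y₁ + y₂ + y₃ = 0
  · have hprod : (x + y₁) * (x + y₂) * (x + y₃) = 0 := by
      linear_combination h + (x ^ 2 - x) * he
    rcases mul_eq_zero.mp hprod with hprod₁₂ | hxy₃
    · rcases mul_eq_zero.mp hprod₁₂ with hxy₁ | hxy₂
      · exact of_y₁ (CharTwo.add_eq_zero.mp hxy₁).symm
      · exact (CharTwo.add_eq_zero.mp hxy₂).symm
    · have hy₁ := congrArg σ (CharTwo.add_eq_zero.mp hxy₃)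
      rw [h₀, h₃] at hy₁
      exact of_y₁ hy₁
  · have hy₁ : (x + y₁ + y₂ + y₃) * (y₁ - x) = 0 := by linear_combination hσ - h
    exact of_y₁ (sub_eq_zero.mp ((mul_eq_zero.mp hy₁).resolve_left he))

theorem apply_apply_eq_self_of_add_one_pow_add_pow_eq_one
    (hdσ : ∀ x : R, x ^ (d + 1) = σ x * σ (σ x) * σ (σ (σ x)))
    (hσ : ∀ x, σ (σ (σ (σ x))) = x) {x : R} (h : (x + 1) ^ d + x ^ d = 1) : σ (σ x) = x := by
  have hσ₁ : ∀ y : R, σ (y + 1) = σ y + 1 := fun y => by rw [map_add, map_one]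
  have hmul : x * (x + 1) ^ (d + 1) + (x + 1) * x ^ (d + 1) = x * (x + 1) := by
    linear_combination x * (x + 1) * h
  rw [hdσ, hdσ, hσ₁, hσ₁, hσ₁] at hmul
  refine eq_of_esymm_relation_of_orbit σ rfl rfl rfl (hσ x) ?_
  linear_combination
    hmul + (x ^ 2 - x * σ x * σ (σ x) * σ (σ (σ x))) * CharTwo.two_eq_zero (R := R)

theorem add_one_pow_add_pow_eq_one_iff
    (hdσ : ∀ x : R, x ^ (d + 1) = σ x * σ (σ x) * σ (σ (σ x)))
    (hσ : ∀ x, σ (σ (σ (σ x))) = x) (hd : d ≠ 0) (x : R) :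
    (x + 1) ^ d + x ^ d = 1 ↔ σ (σ x) = x := by
  refine ⟨apply_apply_eq_self_of_add_one_pow_add_pow_eq_one σ hdσ hσ, fun hx => ?_⟩
  have hx₁ : σ (σ (x + 1)) = x + 1 := by simp only [map_add, map_one, hx]
  rw [pow_eq_sq_apply_of_apply_apply_eq_self σ hd hdσ hx,
    pow_eq_sq_apply_of_apply_apply_eq_self σ hd hdσ hx₁, map_add, map_one]
  linear_combination (σ x ^ 2 + σ x) * CharTwo.two_eq_zero (R := R)

end CharTwo

theorem stmt_7_general (n : ℕ) (q d : ℕ) (hq : q = 2 ^ n)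
    (hd : d = q ^ 3 + q ^ 2 + q - 1)
    (F : Type*) [Field F] [Fintype F] [DecidableEq F] (hF : Fintype.card F = q ^ 4) :
    (∀ x : F, (x + 1) ^ d + x ^ d = 1 ↔ x ^ (q ^ 2) = x) ∧
    (Finset.univ.filter fun x : F => (x + 1) ^ d + x ^ d = 1).card = q ^ 2 := by
  have : CharP F 2 := charP_of_card_eq_prime_pow (f := n * 4) (by rw [hF, hq, pow_mul])
  have hq₁ : 1 < q := lt_of_pow_lt_pow_left₀ 4 (Nat.zero_le _)
    (by rw [one_pow, ← hF]; exact Fintype.one_lt_card)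
  let σ := iterateFrobenius F 2 n
  have hσ : ∀ x, σ x = x ^ q := fun x => by rw [iterateFrobenius_def, hq]
  have hσ₄ : ∀ x, σ (σ (σ (σ x))) = x := fun x => by
    simp only [hσ, ← pow_mul]
    rw [show q * q * q * q = Fintype.card F by rw [hF]; ring, FiniteField.pow_card]
  have hd₀ : d ≠ 0 := by have : q ≤ q ^ 3 + q ^ 2 + q := Nat.le_add_left _ _; omega
  have hdσ : ∀ x : F, x ^ (d + 1) = σ x * σ (σ x) * σ (σ (σ x)) := fun x => by
    rw [hd, Nat.sub_add_cancel (by omega), hσ, hσ, hσ]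
    ring
  have hiff : ∀ x : F, (x + 1) ^ d + x ^ d = 1 ↔ x ^ (q ^ 2) = x := fun x => by
    rw [add_one_pow_add_pow_eq_one_iff σ hdσ hσ₄ hd₀, hσ, hσ, ← pow_mul, sq]
  refine ⟨hiff, ?_⟩
  rw [filter_congr fun x _ => hiff x]
  exact FiniteField.card_filter_pow_eq_self (k := 2) (by rw [hF]; ring)

theorem stmt_7 (n : ℕ) (hn : 0 < n) (q d : ℕ) (hq : q = 2 ^ n)
    (hd : d = q ^ 3 + q ^ 2 + q - 1)
    (F : Type*) [Field F] [Fintype F] [DecidableEq F] (hF : Fintype.card F = q ^ 4) :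
    (∀ x : F, (x + 1) ^ d + x ^ d = 1 ↔ x ^ (q ^ 2) = x) ∧
    (Finset.univ.filter fun x : F => (x + 1) ^ d + x ^ d = 1).card = q ^ 2 :=
  stmt_7_general n q d hq hd F hF
end

section
/- Let n be a positive integer, q = 2^n, and let y, z ∈ F_{q^4} with y^{q-1} = 1 and z^{q^2+1} = 1. If (yz^{-q}+1)(yz^{-1}+1)(yz^{q}+1) + y^2 z^{-2}(yz+1) = yz + 1, then z = 1. -/
theorem charP_two_of_card_eq_two_pow {F : Type*} [Field F] [Fintype F] {k : ℕ}
    (hF : Fintype.card F = 2 ^ k) : CharP F 2 := by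
  have h2k : (2 : F) ^ k = 0 := by exact_mod_cast hF ▸ FiniteField.cast_card_eq_zero F
  exact CharTwo.of_one_ne_zero_of_two_eq_zero one_ne_zero (eq_zero_of_pow_eq_zero h2k)

namespace CharTwo

theorem eq_one_of_pow_eq_one_of_pow_add_two_eq_one {R : Type*} [CommRing R] [CharP R 2]
    [NoZeroDivisors R] {z : R} {m : ℕ} (hm : z ^ m = 1) (hm2 : z ^ (m + 2) = 1) : z = 1 := by
  rwa [pow_add, hm, one_mul, ← one_pow 2, sq_inj] at hm2

/-- In characteristic two, `μ_{q²+1}` meets `μ_{q-1}` and `μ_{q+1}` trivially: both lie in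
`μ_{q²-1}`, and `z ^ (q² + 1) = z ^ (q² - 1) * z ^ 2`. -/
theorem eq_one_of_pow_sq_add_one_eq_one {R : Type*} [CommRing R] [CharP R 2]
    [NoZeroDivisors R] {z : R} {q : ℕ} (hq : 1 ≤ q) (hz : z ^ (q ^ 2 + 1) = 1)
    (h : z ^ (q - 1) = 1 ∨ z ^ (q + 1) = 1) : z = 1 := by
  have hsq : q ^ 2 - 1 = (q + 1) * (q - 1) := by simpa using Nat.sq_sub_sq q 1
  have hz' : z ^ (q ^ 2 - 1) = 1 := by
    rcases h with h | h
    · rw [hsq, mul_comm, pow_mul, h, one_pow]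
    · rw [hsq, pow_mul, h, one_pow]
  refine eq_one_of_pow_eq_one_of_pow_add_two_eq_one hz' ?_
  have : 1 ≤ q ^ 2 := Nat.one_le_pow _ _ hq
  rwa [show q ^ 2 - 1 + 2 = q ^ 2 + 1 by omega]

/-- In characteristic two the two sides differ by `y * z⁻² * w⁻¹ * (y + z) * (w * z + 1) * (z + w)`. -/
theorem add_mul_mul_add_eq_zero {F : Type*} [Field F] [CharP F 2] {y z w : F}
    (hy : y ≠ 0) (hz : z ≠ 0) (hw : w ≠ 0)
    (h : (y * w⁻¹ + 1) * (y * z⁻¹ + 1) * (y * w + 1) + y ^ 2 * (z ^ 2)⁻¹ * (y * z + 1)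
      = y * z + 1) :
    (y + z) * (w * z + 1) * (z + w) = 0 := by
  have h' := sub_eq_zero.mpr h
  field_simp at h'
  have hcleared : y * ((y + z) * (w * z + 1) * (z + w)) * z = 0 := by
    linear_combination z * h' + (y * z ^ 4 * w - y ^ 3 * z ^ 2 * w) * two_eq_zero (R := F)
  simpa [hy, hz] using hcleared

end CharTwo

theorem stmt_9 (n : ℕ) (hn : 0 < n) (q : ℕ) (hq : q = 2 ^ n)
    (F : Type*) [Field F] [Fintype F] (hF : Fintype.card F = q ^ 4)
    (y z : F) (hy : y ^ (q - 1) = 1) (hz : z ^ (q ^ 2 + 1) = 1)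
    (h : (y * (z ^ q)⁻¹ + 1) * (y * z⁻¹ + 1) * (y * z ^ q + 1)
          + y ^ 2 * (z ^ 2)⁻¹ * (y * z + 1) = y * z + 1) :
    z = 1 := by
  have := charP_two_of_card_eq_two_pow (k := n * 4) (by rw [hF, hq, pow_mul])
  have hq2 : 2 ≤ q := hq ▸ Nat.one_lt_two_pow_iff.mpr hn.ne'
  have hy0 : y ≠ 0 := by rintro rfl; simp [zero_pow (by omega : q - 1 ≠ 0)] at hy
  have hz0 : z ≠ 0 := by rintro rfl; simp at hz
  refine CharTwo.eq_one_of_pow_sq_add_one_eq_one (by omega) hz ?_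
  rcases mul_eq_zero.mp (CharTwo.add_mul_mul_add_eq_zero hy0 hz0 (pow_ne_zero q hz0) h) with
    h | hzq
  · rcases mul_eq_zero.mp h with hyz | hzq
    · exact .inl (CharTwo.add_eq_zero.mp hyz ▸ hy)
    · exact .inr (by rw [pow_succ]; exact CharTwo.add_eq_zero.mp hzq)
  · left
    rw [pow_sub₀ z hz0 (by omega), ← CharTwo.add_eq_zero.mp hzq, pow_one, mul_inv_cancel₀ hz0]
end

section
/- Let q = 2^n and γ ∈ F_{q^4} with γ^{q+1} = 1, and let d = q^3 + q^2 + q - 1. Then for any b ∈ F_{q^4} with b ≠ γ, (γ + b)^d = (γ b^{q^3+q} + γ^{-1}(b^{q^3+q^2} + b^{q^2+q} + 1) + γ^{-2} b^{q^2} + b^{q^3+q^2+q} + b^{q^3} + b^q)/(γ + b). -/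
/-!
Write `d + 1 = q³ + q² + q`. In characteristic 2 the maps `x ↦ x ^ q ^ k` are additive, and
`γ ^ (q + 1) = 1` gives `γ ^ q = γ ^ q³ = γ⁻¹` and `γ ^ q² = γ`, so
`(γ + b) ^ (d + 1) = (γ⁻¹ + b ^ q³) (γ + b ^ q²) (γ⁻¹ + b ^ q)`; expanding this product gives
the numerator of the claimed formula.
-/

section UnitCircle

variable {M : Type*} [DivisionMonoid M] {γ : M} {q : ℕ}

theorem pow_eq_inv_of_pow_succ_eq_one (hγ : γ ^ (q + 1) = 1) : γ ^ q = γ⁻¹ :=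
  eq_inv_of_mul_eq_one_left (by rwa [← pow_succ])

theorem pow_sq_eq_self_of_pow_succ_eq_one (hγ : γ ^ (q + 1) = 1) : γ ^ q ^ 2 = γ := by
  rw [sq, pow_mul, pow_eq_inv_of_pow_succ_eq_one hγ, inv_pow,
    pow_eq_inv_of_pow_succ_eq_one hγ, inv_inv]

theorem pow_cube_eq_inv_of_pow_succ_eq_one (hγ : γ ^ (q + 1) = 1) : γ ^ q ^ 3 = γ⁻¹ := by
  rw [pow_succ, pow_mul, pow_sq_eq_self_of_pow_succ_eq_one hγ, pow_eq_inv_of_pow_succ_eq_one hγ]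

end UnitCircle

theorem add_pow_char_pow_pow {R : Type*} [CommRing R] {p : ℕ} [Fact p.Prime] [CharP R p]
    (n k : ℕ) (x y : R) : (x + y) ^ (p ^ n) ^ k = x ^ (p ^ n) ^ k + y ^ (p ^ n) ^ k := by
  rw [← pow_mul]
  exact add_pow_char_pow x y p (n * k)

theorem inv_add_mul_add_mul_inv_add {K : Type*} [Field K] {γ : K} (hγ : γ ≠ 0) (B₁ B₂ B₃ : K) :
    (γ⁻¹ + B₃) * (γ + B₂) * (γ⁻¹ + B₁) = γ * (B₃ * B₁) + γ⁻¹ * (B₃ * B₂ + B₂ * B₁ + 1)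
      + (γ ^ 2)⁻¹ * B₂ + B₃ * B₂ * B₁ + B₃ + B₁ := by
  field_simp
  ring

theorem stmt_15_general (n : ℕ) (q d : ℕ) (hq : q = 2 ^ n)
    (hd : d = q ^ 3 + q ^ 2 + q - 1)
    (F : Type*) [Field F] [Fintype F] (hF : Fintype.card F = q ^ 4)
    (γ : F) (hγ : γ ^ (q + 1) = 1) (b : F) (hb : b ≠ γ) :
    (γ + b) ^ d = (γ * b ^ (q ^ 3 + q) + γ⁻¹ * (b ^ (q ^ 3 + q ^ 2) + b ^ (q ^ 2 + q) + 1)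
      + (γ ^ 2)⁻¹ * b ^ (q ^ 2) + b ^ (q ^ 3 + q ^ 2 + q) + b ^ (q ^ 3) + b ^ q) / (γ + b) := by
  subst hq
  have : CharP F 2 := charP_of_card_eq_prime_pow (hF.trans (pow_mul 2 n 4).symm)
  have hγ₀ : γ ≠ 0 := by rintro rfl; simp at hγ
  have hγb : γ + b ≠ 0 := fun h ↦ hb (CharTwo.add_eq_zero.mp h).symm
  have hd₁ : d + 1 = (2 ^ n) ^ 3 + (2 ^ n) ^ 2 + (2 ^ n) ^ 1 := by
    rw [hd, pow_one]
    exact Nat.sub_add_cancel (Nat.one_le_iff_ne_zero.mpr (by positivity))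
  rw [eq_div_iff hγb, ← pow_succ, hd₁, pow_add, pow_add, add_pow_char_pow_pow, add_pow_char_pow_pow,
    add_pow_char_pow_pow, pow_cube_eq_inv_of_pow_succ_eq_one hγ, pow_sq_eq_self_of_pow_succ_eq_one hγ,
    pow_one, pow_eq_inv_of_pow_succ_eq_one hγ, inv_add_mul_add_mul_inv_add hγ₀]
  simp only [pow_add]

theorem stmt_15 (n : ℕ) (hn : 0 < n) (q d : ℕ) (hq : q = 2 ^ n)
    (hd : d = q ^ 3 + q ^ 2 + q - 1)
    (F : Type*) [Field F] [Fintype F] (hF : Fintype.card F = q ^ 4)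
    (γ : F) (hγ : γ ^ (q + 1) = 1) (b : F) (hb : b ≠ γ) :
    (γ + b) ^ d = (γ * b ^ (q ^ 3 + q) + γ⁻¹ * (b ^ (q ^ 3 + q ^ 2) + b ^ (q ^ 2 + q) + 1)
      + (γ ^ 2)⁻¹ * b ^ (q ^ 2) + b ^ (q ^ 3 + q ^ 2 + q) + b ^ (q ^ 3) + b ^ q) / (γ + b) :=
  stmt_15_general n q d hq hd F hF γ hγ b hb
end

section
/- Let q = 2^n and γ_1, γ_2 ∈ F_{q^4} with γ_1^{q+1} = γ_2^{q+1} = 1, and let d = q^3 + q^2 + q - 1. Then (γ_1 + γ_2)^d = (γ_1^2 + γ_2^2)/(γ_1^2 γ_2^2) whenever γ_1 ≠ γ_2. -/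
/-!
On `μ_{q+1}` the Frobenius `x ↦ x ^ q` acts as inversion, so for `s = γ₁ + γ₂` we get
`s ^ q = γ₁⁻¹ + γ₂⁻¹` and `s ^ q ^ 2 = s`. Splitting `d = q ^ 3 + q ^ 2 + (q - 1)` gives
`s ^ d = s ^ q * s * s ^ (q - 1) = (s ^ q) ^ 2 = (γ₁⁻¹ + γ₂⁻¹) ^ 2`, and squaring is additive
in characteristic `2`.
-/

theorem pow_eq_inv_of_pow_succ_eq_one_s16 {M : Type*} [DivisionMonoid M] {x : M} {q : ℕ}
    (h : x ^ (q + 1) = 1) : x ^ q = x⁻¹ :=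
  eq_inv_of_mul_eq_one_left (by rwa [← pow_succ])

section UnitCircle

variable {F : Type*} [Field F] {p : ℕ} [ExpChar F p] {n : ℕ} {γ₁ γ₂ : F}

theorem add_pow_expChar_pow_eq_inv_add_inv (h₁ : γ₁ ^ (p ^ n + 1) = 1)
    (h₂ : γ₂ ^ (p ^ n + 1) = 1) : (γ₁ + γ₂) ^ p ^ n = γ₁⁻¹ + γ₂⁻¹ := by
  rw [add_pow_expChar_pow, pow_eq_inv_of_pow_succ_eq_one_s16 h₁, pow_eq_inv_of_pow_succ_eq_one_s16 h₂]

theorem add_pow_expChar_pow_sq (h₁ : γ₁ ^ (p ^ n + 1) = 1) (h₂ : γ₂ ^ (p ^ n + 1) = 1) :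
    (γ₁ + γ₂) ^ (p ^ n) ^ 2 = γ₁ + γ₂ := by
  rw [sq, pow_mul, add_pow_expChar_pow_eq_inv_add_inv h₁ h₂, add_pow_expChar_pow, inv_pow,
    inv_pow, pow_eq_inv_of_pow_succ_eq_one_s16 h₁, pow_eq_inv_of_pow_succ_eq_one_s16 h₂, inv_inv, inv_inv]

theorem add_pow_expChar_pow_cube_add_sq_add_sub_one (h₁ : γ₁ ^ (p ^ n + 1) = 1)
    (h₂ : γ₂ ^ (p ^ n + 1) = 1) :
    (γ₁ + γ₂) ^ ((p ^ n) ^ 3 + (p ^ n) ^ 2 + p ^ n - 1) = (γ₁⁻¹ + γ₂⁻¹) ^ 2 := by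
  set q := p ^ n
  set s := γ₁ + γ₂
  have hq : 1 ≤ q := Nat.one_le_pow _ _ (expChar_pos F p)
  have hexp : q ^ 3 + q ^ 2 + q - 1 = q ^ 2 * q + q ^ 2 + (q - 1) := by
    have : q ^ 2 * q = q ^ 3 := by ring
    omega
  calc s ^ (q ^ 3 + q ^ 2 + q - 1) = (s ^ q ^ 2) ^ q * (s ^ q ^ 2 * s ^ (q - 1)) := by
        rw [hexp, pow_add, pow_add, pow_mul, mul_assoc]
    _ = s ^ q * s ^ q := by
        rw [add_pow_expChar_pow_sq h₁ h₂, ← pow_succ', Nat.sub_add_cancel hq]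
    _ = (γ₁⁻¹ + γ₂⁻¹) ^ 2 := by
        rw [← sq, add_pow_expChar_pow_eq_inv_add_inv h₁ h₂]

end UnitCircle

theorem stmt_16_general (n : ℕ) (q d : ℕ) (hq : q = 2 ^ n)
    (hd : d = q ^ 3 + q ^ 2 + q - 1)
    (F : Type*) [Field F] [Fintype F] (hF : Fintype.card F = q ^ 4)
    (γ₁ γ₂ : F) (h₁ : γ₁ ^ (q + 1) = 1) (h₂ : γ₂ ^ (q + 1) = 1) :
    (γ₁ + γ₂) ^ d = (γ₁ ^ 2 + γ₂ ^ 2) / (γ₁ ^ 2 * γ₂ ^ 2) := by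
  subst hq hd
  have : Fact (Nat.Prime 2) := ⟨Nat.prime_two⟩
  have : CharP F 2 := charP_of_card_eq_prime_pow (f := n * 4) (by rw [hF, pow_mul])
  have hγ₁ : γ₁ ≠ 0 := by rintro rfl; simp at h₁
  have hγ₂ : γ₂ ≠ 0 := by rintro rfl; simp at h₂
  rw [add_pow_expChar_pow_cube_add_sq_add_sub_one h₁ h₂, CharTwo.add_sq]
  field_simp
  ring

theorem stmt_16 (n : ℕ) (hn : 0 < n) (q d : ℕ) (hq : q = 2 ^ n)
    (hd : d = q ^ 3 + q ^ 2 + q - 1)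
    (F : Type*) [Field F] [Fintype F] (hF : Fintype.card F = q ^ 4)
    (γ₁ γ₂ : F) (h₁ : γ₁ ^ (q + 1) = 1) (h₂ : γ₂ ^ (q + 1) = 1) (hne : γ₁ ≠ γ₂) :
    (γ₁ + γ₂) ^ d = (γ₁ ^ 2 + γ₂ ^ 2) / (γ₁ ^ 2 * γ₂ ^ 2) :=
  stmt_16_general n q d hq hd F hF γ₁ γ₂ h₁ h₂
end

section
/- Let q = 2^n and b ∈ F_{q^4} with b ∉ F_{q^2}. If b^{q^2+1} = 1 and b + b^q + b^{q^2} + b^{q^3} = 0, then a contradiction follows; i.e., there is no b ∈ F_{q^4} \ F_{q^2} with b^{q^2+1} = 1 and Tr_{F_{q^4}/F_q}(b) = 0. -/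
/-! Since `b ^ (q ^ 2 + 1) = 1`, the conjugate `b ^ (q ^ 2)` is `b⁻¹`, and raising to the `q`-th
power gives `b ^ (q ^ 3) = (b ^ q)⁻¹`. With `d = b ^ q` the trace condition reads
`b + d + b⁻¹ + d⁻¹ = 0`, which in characteristic 2 factors as `(b + d) (b d + 1) = 0`.
If `d = b` then `b ^ (q ^ 2) = b`; if `d = b⁻¹` then `b ^ (q ^ 2) = (b⁻¹) ^ q = d⁻¹ = b`.
Either way `b ∈ F_{q^2}`. -/

theorem two_eq_zero_of_card_eq_two_pow {F : Type*} [Field F] [Fintype F] {m : ℕ}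
    (h : Fintype.card F = 2 ^ m) : (2 : F) = 0 := by
  have hcard : ((2 ^ m : ℕ) : F) = 0 := h ▸ FiniteField.cast_card_eq_zero F
  exact eq_zero_of_pow_eq_zero (n := m) (by exact_mod_cast hcard)

theorem pow_pow_eq_self_of_pow_eq_inv {G : Type*} [DivisionMonoid G] {x : G} {q : ℕ}
    (h : x ^ q = x⁻¹) : (x ^ q) ^ q = x := by
  rw [h, inv_pow, h, inv_inv]

theorem eq_or_eq_inv_of_add_add_inv_add_inv_eq_zero {F : Type*} [Field F] (h2 : (2 : F) = 0)
    {b d : F} (hb : b ≠ 0) (hd : d ≠ 0) (h : b + d + b⁻¹ + d⁻¹ = 0) : d = b ∨ d = b⁻¹ := by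
  have hfactor : (d - b) * (b * d - 1) = 0 := by
    field_simp at h
    linear_combination h - (b ^ 2 * d + d) * h2
  rcases mul_eq_zero.mp hfactor with h | h
  · exact Or.inl (sub_eq_zero.mp h)
  · exact Or.inr (eq_inv_of_mul_eq_one_right (sub_eq_zero.mp h))

theorem stmt_17_general (n : ℕ) (q : ℕ) (hq : q = 2 ^ n)
    (F : Type*) [Field F] [Fintype F] (hF : Fintype.card F = q ^ 4) :
    ¬ ∃ b : F, b ^ (q ^ 2) ≠ b ∧ b ^ (q ^ 2 + 1) = 1 ∧
      b + b ^ q + b ^ (q ^ 2) + b ^ (q ^ 3) = 0 := by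
  rintro ⟨b, hne, hnorm, htrace⟩
  have h2 : (2 : F) = 0 := two_eq_zero_of_card_eq_two_pow (m := n * 4) (by rw [hF, hq, pow_mul])
  have hb : b ≠ 0 := by rintro rfl; simp at hnorm
  have hconj : b ^ (q ^ 2) = b⁻¹ := eq_inv_of_mul_eq_one_left (by rwa [← pow_succ])
  have hconj' : b ^ (q ^ 3) = (b ^ q)⁻¹ := by rw [pow_succ, pow_mul, hconj, inv_pow]
  have hsq : b ^ (q ^ 2) = (b ^ q) ^ q := by rw [sq, pow_mul]
  rw [hconj, hconj'] at htrace
  rcases eq_or_eq_inv_of_add_add_inv_add_inv_eq_zero h2 hb (pow_ne_zero q hb) htrace with h | h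
  · exact hne (by rw [hsq, h, h])
  · exact hne (hsq.trans (pow_pow_eq_self_of_pow_eq_inv h))

theorem stmt_17 (n : ℕ) (hn : 0 < n) (q : ℕ) (hq : q = 2 ^ n)
    (F : Type*) [Field F] [Fintype F] (hF : Fintype.card F = q ^ 4) :
    ¬ ∃ b : F, b ^ (q ^ 2) ≠ b ∧ b ^ (q ^ 2 + 1) = 1 ∧
      b + b ^ q + b ^ (q ^ 2) + b ^ (q ^ 3) = 0 :=
  stmt_17_general n q hq F hF
end

section
/- Let n be a positive integer, q = 2^n, and d = q^3 + q^2 + q - 1. For every b ∈ F_{q^4} with b ∉ F_{q^2}, the equation (x+1)^d + x^d = b has at most 2 solutions x in F_{q^4}. -/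
/-!
Let `σ` be the Frobenius `z ↦ z ^ q` of `F_{q⁴}` and `N z = z · σz · σ²z · σ³z`. Since
`x ^ d = N x / x²`, a solution `x ∉ {0, 1}` satisfies `b = N x / x² + N (x + 1) / (x + 1)²`.
Put `a = x · σ²x`, `c = (x + 1)(σ²x + 1)`, `A = σa`, `K = σc`, so that `N x = aA` and
`N (x + 1) = cK`. Then `b + σ²b` and `b · σ²b` are explicit rational functions of `a, c, A, K`, and
so are `σb + σ³b` and `σb · σ³b`. Eliminating `a, c, A, K` gives, with `T = b + σb + σ²b + σ³b`,
`(N x + N (x + 1)) · T = 1 + N b` and `(x + σ²x)² · T = (b + σ²b)(1 + σb · σ³b)`, and `T ≠ 0`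
because `b ∉ F_{q²}`. So `N x + N (x + 1)` and `(x + σ²x)²` depend only on `b`; by
`(b + σ²b)(x² + x)² = (N x + N (x + 1))(x + σ²x)² + σ²b ((x + σ²x)² + x + σ²x)²`, so does `x² + x`,
which leaves only `x` and `x + 1`.
-/

section CharTwoRing

variable {R : Type*} [CommRing R] [CharP R 2]

lemma add_eq_mul_add_mul_add_one (x y : R) : x + y = x * y + (x + 1) * (y + 1) + 1 := by
  ring_nf
  reduce_mod_char!

lemma eq_or_eq_add_one_of_sq_add_self_eq [IsDomain R] {x y : R} (h : y ^ 2 + y = x ^ 2 + x) :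
    y = x ∨ y = x + 1 := by
  have hprod : (y + x) * (y + (x + 1)) = 0 := by
    linear_combination (norm := ring_nf) h
    reduce_mod_char!
  rcases mul_eq_zero.mp hprod with h | h
  · exact Or.inl (CharTwo.add_eq_zero.mp h)
  · exact Or.inr (CharTwo.add_eq_zero.mp h)

end CharTwoRing

section InvSqComb

variable {F : Type*} [Field F]

def invSqComb (u v x : F) : F := u / x ^ 2 + v / (x + 1) ^ 2

lemma map_invSqComb {G : Type*} [Field G] (σ : F →+* G) (u v x : F) :
    σ (invSqComb u v x) = invSqComb (σ u) (σ v) (σ x) := by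
  simp only [invSqComb, map_add, map_div₀, map_pow, map_one]

-- For `b = invSqComb (a * A) (c * K) x` with `a = x * σ²x`, `c = (x + 1) * (σ²x + 1)`, `A = σa`
-- and `K = σc`, these are `b + σ²b` and `b * σ²b`.
def pairSum (a c A K : F) : F := (a + c + 1) ^ 2 * (A / a + K / c)

def pairProd (a c A K : F) : F := A ^ 2 + K ^ 2 + A * K * (a + c + 1) ^ 2 / (a * c)

variable [CharP F 2]

section Pair

variable {x y : F} (hx : x ≠ 0) (hy : y ≠ 0) (hx₁ : x + 1 ≠ 0) (hy₁ : y + 1 ≠ 0)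
include hx hy hx₁ hy₁

lemma invSqComb_add_invSqComb (A K : F) :
    invSqComb (x * y * A) ((x + 1) * (y + 1) * K) x + invSqComb (x * y * A) ((x + 1) * (y + 1) * K) y
      = pairSum (x * y) ((x + 1) * (y + 1)) A K := by
  rw [pairSum, ← add_eq_mul_add_mul_add_one, invSqComb, invSqComb]
  field_simp
  ring_nf
  reduce_mod_char!

lemma invSqComb_mul_invSqComb (A K : F) :
    invSqComb (x * y * A) ((x + 1) * (y + 1) * K) x * invSqComb (x * y * A) ((x + 1) * (y + 1) * K) y
      = pairProd (x * y) ((x + 1) * (y + 1)) A K := by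
  rw [pairProd, ← add_eq_mul_add_mul_add_one, invSqComb, invSqComb]
  field_simp
  ring_nf
  reduce_mod_char!

lemma invSqComb_add_invSqComb_mul_sq_add_self_sq (u v : F) :
    (invSqComb u v x + invSqComb u v y) * (x ^ 2 + x) ^ 2
      = (u + v) * (x + y) ^ 2 + invSqComb u v y * ((x + y) ^ 2 + (x + y)) ^ 2 := by
  rw [invSqComb, invSqComb]
  field_simp
  ring_nf
  reduce_mod_char!

end Pair

section PairIdentities

variable {a c A K : F} (ha : a ≠ 0) (hc : c ≠ 0) (hA : A ≠ 0) (hK : K ≠ 0)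
include ha hc hA hK

-- With `m = a * c`, `M = A * K` and `Z = (a + c + 1)² M + (A + K + 1)² m`, both sides equal
-- `Z (Z + m + M) / (m M)`.
lemma mul_pairSum_add_pairSum :
    (a * A + c * K) * (pairSum a c A K + pairSum A K a c)
      = 1 + pairProd a c A K * pairProd A K a c := by
  rw [pairSum, pairSum, pairProd, pairProd]
  field_simp
  ring_nf
  reduce_mod_char!

lemma sq_mul_pairSum_add_pairSum :
    (a + c + 1) ^ 2 * (pairSum a c A K + pairSum A K a c)
      = pairSum a c A K * (1 + pairProd A K a c) := by
  rw [pairSum, pairSum, pairProd]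
  field_simp
  ring_nf
  reduce_mod_char!

end PairIdentities

theorem exists_trace_relations {x y z w b₀ b₁ b₂ b₃ : F}
    (hx : x ≠ 0) (hy : y ≠ 0) (hz : z ≠ 0) (hw : w ≠ 0)
    (hx₁ : x + 1 ≠ 0) (hy₁ : y + 1 ≠ 0) (hz₁ : z + 1 ≠ 0) (hw₁ : w + 1 ≠ 0)
    (h₀ : invSqComb (x * y * (z * w)) ((x + 1) * (y + 1) * ((z + 1) * (w + 1))) x = b₀)
    (h₂ : invSqComb (x * y * (z * w)) ((x + 1) * (y + 1) * ((z + 1) * (w + 1))) y = b₂)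
    (h₁ : invSqComb (z * w * (x * y)) ((z + 1) * (w + 1) * ((x + 1) * (y + 1))) z = b₁)
    (h₃ : invSqComb (z * w * (x * y)) ((z + 1) * (w + 1) * ((x + 1) * (y + 1))) w = b₃) :
    ∃ C X : F, C * (b₀ + b₂ + (b₁ + b₃)) = 1 + b₀ * b₂ * (b₁ * b₃) ∧
      X * (b₀ + b₂ + (b₁ + b₃)) = (b₀ + b₂) * (1 + b₁ * b₃) ∧
      (b₀ + b₂) * (x ^ 2 + x) ^ 2 = C * X + b₂ * (X ^ 2 + X) := by
  have hsum := invSqComb_add_invSqComb hx hy hx₁ hy₁ (z * w) ((z + 1) * (w + 1))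
  have hprod := invSqComb_mul_invSqComb hx hy hx₁ hy₁ (z * w) ((z + 1) * (w + 1))
  have hsum' := invSqComb_add_invSqComb hz hw hz₁ hw₁ (x * y) ((x + 1) * (y + 1))
  have hprod' := invSqComb_mul_invSqComb hz hw hz₁ hw₁ (x * y) ((x + 1) * (y + 1))
  have hsq := invSqComb_add_invSqComb_mul_sq_add_self_sq hx hy hx₁ hy₁
    (x * y * (z * w)) ((x + 1) * (y + 1) * ((z + 1) * (w + 1)))
  rw [h₀, h₂] at hsum hprod hsq
  rw [h₁, h₃] at hsum' hprod'
  have ha := mul_ne_zero hx hy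
  have hc := mul_ne_zero hx₁ hy₁
  have hA := mul_ne_zero hz hw
  have hK := mul_ne_zero hz₁ hw₁
  -- `C = N x + N (x + 1)` and `X = (x + y)²`
  refine ⟨x * y * (z * w) + (x + 1) * (y + 1) * ((z + 1) * (w + 1)),
    (x * y + (x + 1) * (y + 1) + 1) ^ 2, ?_, ?_, ?_⟩
  · rw [hsum, hsum', hprod, hprod']
    exact mul_pairSum_add_pairSum ha hc hA hK
  · rw [hsum, hsum', hprod']
    exact sq_mul_pairSum_add_pairSum ha hc hA hK
  · rw [hsq, add_eq_mul_add_mul_add_one x y, CharTwo.add_sq _ (x * y + (x + 1) * (y + 1) + 1)]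

end InvSqComb

section Conjugates

def cyclicNorm {R : Type*} [CommSemiring R] (σ : R →+* R) (x : R) : R :=
  x * σ x * σ (σ x) * σ (σ (σ x))

lemma map_cyclicNorm {R : Type*} [CommSemiring R] {σ : R →+* R} (hσ : ∀ z, σ (σ (σ (σ z))) = z)
    (x : R) : σ (cyclicNorm σ x) = cyclicNorm σ x := by
  simp only [cyclicNorm, map_mul, hσ]
  ring

variable {F : Type*} [Field F] [CharP F 2] {σ : F →+* F}

lemma trace_ne_zero {b X : F} (hb : σ (σ b) ≠ b)
    (h : X * (b + σ (σ b) + (σ b + σ (σ (σ b)))) = (b + σ (σ b)) * (1 + σ b * σ (σ (σ b)))) :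
    b + σ (σ b) + (σ b + σ (σ (σ b))) ≠ 0 := by
  intro hT
  have hsum : b + σ (σ b) ≠ 0 := fun h ↦ hb (CharTwo.add_eq_zero.mp h).symm
  rw [hT, mul_zero, eq_comm, mul_eq_zero, or_iff_right hsum, CharTwo.add_eq_zero, eq_comm] at h
  have hprod : b * σ (σ b) = 1 := σ.injective (by rwa [map_mul, map_one])
  -- `σ b` is a root of `(Y + b) * (Y + σ² b) = Y² + (b + σ² b) Y + b σ² b`.
  have hroot : (σ b + b) * (σ b + σ (σ b)) = 0 := by
    linear_combination σ b * hT + hprod - h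
  rcases mul_eq_zero.mp hroot with h₁ | h₁
  · rw [CharTwo.add_eq_zero] at h₁
    exact hb (by rw [h₁, h₁])
  · have h₀ : σ b = b := (σ.injective (CharTwo.add_eq_zero.mp h₁)).symm
    exact hb (by rw [h₀, h₀])

variable (hσ : ∀ z, σ (σ (σ (σ z))) = z)
include hσ

theorem exists_trace_relations_of_invSqComb_eq {b x : F} (hx : x ≠ 0) (hx₁ : x + 1 ≠ 0)
    (hb : invSqComb (cyclicNorm σ x) (cyclicNorm σ (x + 1)) x = b) :
    ∃ C X : F, C * (b + σ (σ b) + (σ b + σ (σ (σ b)))) = 1 + b * σ (σ b) * (σ b * σ (σ (σ b))) ∧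
      X * (b + σ (σ b) + (σ b + σ (σ (σ b)))) = (b + σ (σ b)) * (1 + σ b * σ (σ (σ b))) ∧
      (b + σ (σ b)) * (x ^ 2 + x) ^ 2 = C * X + σ (σ b) * (X ^ 2 + X) := by
  have hσ₁ (z : F) : σ (z + 1) = σ z + 1 := by rw [map_add, map_one]
  have hne {z : F} (hz : z ≠ 0) : σ z ≠ 0 := (map_ne_zero σ).mpr hz
  have hb₁ : invSqComb (cyclicNorm σ x) (cyclicNorm σ (x + 1)) (σ x) = σ b := by
    rw [← hb, map_invSqComb, map_cyclicNorm hσ, map_cyclicNorm hσ]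
  have hb₂ : invSqComb (cyclicNorm σ x) (cyclicNorm σ (x + 1)) (σ (σ x)) = σ (σ b) := by
    rw [← hb₁, map_invSqComb, map_cyclicNorm hσ, map_cyclicNorm hσ]
  have hb₃ : invSqComb (cyclicNorm σ x) (cyclicNorm σ (x + 1)) (σ (σ (σ x))) = σ (σ (σ b)) := by
    rw [← hb₂, map_invSqComb, map_cyclicNorm hσ, map_cyclicNorm hσ]
  have hN (z : F) : cyclicNorm σ z = z * σ (σ z) * (σ z * σ (σ (σ z))) := by
    rw [cyclicNorm]; ring
  have hN' (z : F) : cyclicNorm σ z = σ z * σ (σ (σ z)) * (z * σ (σ z)) := by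
    rw [cyclicNorm]; ring
  simp only [hN, hσ₁] at hb hb₂
  simp only [hN', hσ₁] at hb₁ hb₃
  exact exists_trace_relations hx (hne (hne hx)) (hne hx) (hne (hne (hne hx)))
    hx₁ (by rw [← hσ₁, ← hσ₁]; exact hne (hne hx₁)) (by rw [← hσ₁]; exact hne hx₁)
    (by rw [← hσ₁, ← hσ₁, ← hσ₁]; exact hne (hne (hne hx₁))) hb hb₂ hb₁ hb₃

theorem eq_or_eq_add_one_of_invSqComb_eq {b x y : F} (hb : σ (σ b) ≠ b)
    (hx : x ≠ 0) (hx₁ : x + 1 ≠ 0) (hy : y ≠ 0) (hy₁ : y + 1 ≠ 0)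
    (hxb : invSqComb (cyclicNorm σ x) (cyclicNorm σ (x + 1)) x = b)
    (hyb : invSqComb (cyclicNorm σ y) (cyclicNorm σ (y + 1)) y = b) :
    y = x ∨ y = x + 1 := by
  obtain ⟨C, X, hC, hX, hxC⟩ := exists_trace_relations_of_invSqComb_eq hσ hx hx₁ hxb
  obtain ⟨C', X', hC', hX', hyC⟩ := exists_trace_relations_of_invSqComb_eq hσ hy hy₁ hyb
  have hT := trace_ne_zero hb hX
  have hsum : b + σ (σ b) ≠ 0 := fun h ↦ hb (CharTwo.add_eq_zero.mp h).symm
  rw [mul_right_cancel₀ hT (hC'.trans hC.symm), mul_right_cancel₀ hT (hX'.trans hX.symm),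
    ← hxC] at hyC
  exact eq_or_eq_add_one_of_sq_add_self_eq (CharTwo.sq_inj.mp (mul_left_cancel₀ hsum hyC))

end Conjugates

lemma pow_eq_cyclicNorm_div_sq {F : Type*} [Field F] (p n : ℕ) [ExpChar F p] {x : F}
    (hx : x ≠ 0) :
    x ^ ((p ^ n) ^ 3 + (p ^ n) ^ 2 + p ^ n - 1) = cyclicNorm (iterateFrobenius F p n) x / x ^ 2 := by
  have hq : 1 ≤ p ^ n := Nat.one_le_pow _ _ (expChar_pos F p)
  rw [eq_div_iff (pow_ne_zero 2 hx), ← pow_add,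
    show (p ^ n) ^ 3 + (p ^ n) ^ 2 + p ^ n - 1 + 2 = (p ^ n) ^ 3 + (p ^ n) ^ 2 + p ^ n + 1 by omega]
  simp only [cyclicNorm, iterateFrobenius_def, ← pow_mul]
  ring

lemma Finset.card_le_two_of_forall_eq_or_eq {α : Type*} [DecidableEq α] {s : Finset α}
    (f : α → α) (h : ∀ x ∈ s, ∀ y ∈ s, y = x ∨ y = f x) : s.card ≤ 2 := by
  obtain rfl | ⟨x, hx⟩ := s.eq_empty_or_nonempty
  · simp
  · exact (Finset.card_le_card fun y hy ↦ by simpa using h x hx y hy).trans Finset.card_le_two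

theorem stmt_18_general (n : ℕ) (q d : ℕ) (hq : q = 2 ^ n)
    (hd : d = q ^ 3 + q ^ 2 + q - 1)
    (F : Type*) [Field F] [Fintype F] [DecidableEq F] (hF : Fintype.card F = q ^ 4)
    (b : F) (hb : b ^ (q ^ 2) ≠ b) :
    (Finset.univ.filter fun x : F => (x + 1) ^ d + x ^ d = b).card ≤ 2 := by
  subst hq
  have : CharP F 2 := charP_of_card_eq_prime_pow (f := n * 4) (by rw [hF, pow_mul])
  set σ := iterateFrobenius F 2 n
  have hσ (z : F) : σ (σ (σ (σ z))) = z := by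
    calc σ (σ (σ (σ z))) = z ^ Fintype.card F := by
          simp only [σ, iterateFrobenius_def, ← pow_mul, hF]
          ring_nf
      _ = z := FiniteField.pow_card z
  have hσb : σ (σ b) ≠ b := by simpa only [σ, iterateFrobenius_def, ← pow_mul, ← sq] using hb
  have hsol {x : F} (hx : (x + 1) ^ d + x ^ d = b) :
      x ≠ 0 ∧ x + 1 ≠ 0 ∧ invSqComb (cyclicNorm σ x) (cyclicNorm σ (x + 1)) x = b := by
    have hmov (hx' : σ x = x) : False :=
      hσb (by rw [← hx]; simp only [map_add, map_pow, map_one, hx'])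
    have hx₀ : x ≠ 0 := fun h ↦ hmov (by rw [h, map_zero])
    have hx₁ : x + 1 ≠ 0 := fun h ↦ hmov (by rw [CharTwo.add_eq_zero.mp h, map_one])
    refine ⟨hx₀, hx₁, ?_⟩
    rw [invSqComb, ← pow_eq_cyclicNorm_div_sq 2 n hx₀, ← pow_eq_cyclicNorm_div_sq 2 n hx₁, ← hd,
      add_comm, hx]
  refine Finset.card_le_two_of_forall_eq_or_eq (· + 1) fun x hx y hy ↦ ?_
  obtain ⟨hx₀, hx₁, hxb⟩ := hsol (Finset.mem_filter.mp hx).2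
  obtain ⟨hy₀, hy₁, hyb⟩ := hsol (Finset.mem_filter.mp hy).2
  exact eq_or_eq_add_one_of_invSqComb_eq hσ hσb hx₀ hx₁ hy₀ hy₁ hxb hyb

theorem stmt_18 (n : ℕ) (hn : 0 < n) (q d : ℕ) (hq : q = 2 ^ n)
    (hd : d = q ^ 3 + q ^ 2 + q - 1)
    (F : Type*) [Field F] [Fintype F] [DecidableEq F] (hF : Fintype.card F = q ^ 4)
    (b : F) (hb : b ^ (q ^ 2) ≠ b) :
    (Finset.univ.filter fun x : F => (x + 1) ^ d + x ^ d = b).card ≤ 2 :=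
  stmt_18_general n q d hq hd F hF b hb
end
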